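/- If Φ_1, Φ_2 are quantum channels covariant with respect to unitary representations U_g (on H) and V_g (on K) of a group G, i.e., Φ_i ∘ Ad_{U_g} = Ad_{V_g} ∘ Φ_i, and the representation g ↦ U_g is irreducible, then for any λ ∈ (0,1) the partial trace Tr_K|λC(Φ_1) − (1−λ)C(Φ_2)| is proportional to the identity on H. -/

import Mathlib

/-!
By covariance, `Δ = λ C(Φ₁) - (1 - λ) C(Φ₂)` has the same conjugates by the unitaries `1 ⊗ U_gᵀ` and `V_g ⊗ 1`. Unitary conjugation commutes with the absolute value, so
`|Δ|` has the same property, and the partial trace over `K` absorbs `V_g ⊗ 1`: hence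
`M = Tr_K |Δ|` is fixed by conjugation with every `U_gᵀ`. Transposing, the hermitian matrix `Mᵀ`
commutes with every `U_g`, so it is scalar by irreducibility (Schur's lemma).
-/

open scoped ComplexOrder Matrix

variable {H K : Type*} [Fintype H] [DecidableEq H] [Fintype K] [DecidableEq K]

/-- Partial trace over the first factor `K` of `K × H`. -/
noncomputable def ptK (M : Matrix (K × H) (K × H) ℂ) : Matrix H H ℂ :=
  Matrix.of fun i j => ∑ k : K, M (k, i) (k, j)

/-- The operator absolute value `|A| = √(AᴴA)`. -/
noncomputable def matAbs {d : Type*} [Fintype d] [DecidableEq d]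
    (A : Matrix d d ℂ) : Matrix d d ℂ :=
  ((Matrix.posSemidef_conjTranspose_mul_self A).1.eigenvectorUnitary : Matrix d d ℂ) *
    Matrix.diagonal ((↑) ∘ Real.sqrt ∘ (Matrix.posSemidef_conjTranspose_mul_self A).1.eigenvalues) *
    (star (Matrix.posSemidef_conjTranspose_mul_self A).1.eigenvectorUnitary : Matrix d d ℂ)

/-- The Choi matrix of a linear map on matrices. -/
noncomputable def choi (Φ : Matrix H H ℂ →ₗ[ℂ] Matrix K K ℂ) :
    Matrix (K × H) (K × H) ℂ :=
  Matrix.of fun p q => Φ (Matrix.single p.2 q.2 1) p.1 q.1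

open scoped Kronecker MatrixOrder

lemma CFC.abs_unitary_conj {A : Type*} [Ring A] [StarRing A] [Algebra ℝ A] [TopologicalSpace A]
    [IsTopologicalRing A] [T2Space A] [PartialOrder A] [StarOrderedRing A]
    [NonUnitalContinuousFunctionalCalculus ℝ A IsSelfAdjoint] [NonnegSpectrumClass ℝ A]
    {u : A} (hu : u ∈ unitary A) (a : A) :
    CFC.abs (u * a * star u) = u * CFC.abs a * star u := by
  refine CFC.sqrt_unique ?_ (star_right_conjugate_nonneg (CFC.abs_nonneg a) u)
  have hu' : star u * u = 1 := Unitary.star_mul_self_of_mem hu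
  calc u * CFC.abs a * star u * (u * CFC.abs a * star u)
      = u * (CFC.abs a * (star u * u) * CFC.abs a) * star u := by simp only [mul_assoc]
    _ = u * (star a * (star u * u) * a) * star u := by
      rw [hu', mul_one, mul_one, CFC.abs_mul_abs]
    _ = star (u * a * star u) * (u * a * star u) := by simp only [star_mul, star_star, mul_assoc]

lemma Unitary.mul_eq_mul_of_mul_mul_star_eq {R : Type*} [Monoid R] [StarMul R] {u a : R}
    (hu : u ∈ unitary R) (h : u * a * star u = a) : u * a = a * u :=
  calc u * a = u * a * (star u * u) := by rw [Unitary.star_mul_self_of_mem hu, mul_one]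
    _ = a * u := by rw [← mul_assoc, h]

/-- Schur's lemma: the spectral projection of `M` onto one of its eigenvalues commutes with the
family, so it is `0` or `1`. -/
lemma Matrix.exists_eq_smul_one_of_forall_commute {d ι : Type*} [Fintype d] [DecidableEq d]
    (U : ι → Matrix d d ℂ)
    (hirr : ∀ P : Matrix d d ℂ, P.IsHermitian → P * P = P →
      (∀ g, P * U g = U g * P) → P = 0 ∨ P = 1)
    {M : Matrix d d ℂ} (hM : M.IsHermitian) (hcomm : ∀ g, M * U g = U g * M) :
    ∃ c : ℂ, M = c • 1 := by
  rcases isEmpty_or_nonempty d with _ | ⟨⟨i⟩⟩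
  · exact ⟨0, Subsingleton.elim _ _⟩
  set c := hM.eigenvalues i
  have hc : c ∈ spectrum ℝ M := hM.eigenvalues_mem_spectrum_real i
  set f : ℝ → ℝ := fun x => if x = c then 1 else 0
  have hM' : IsSelfAdjoint M := hM
  have hf : ContinuousOn f (spectrum ℝ M) := M.finite_real_spectrum.continuousOn f
  have hff : ∀ x, f x * f x = f x := fun x => by simp only [f]; split_ifs <;> simp
  obtain hP | hP := hirr (cfc f M) (cfc_predicate f M) (by rw [← cfc_mul ..]; simp only [hff])
    (fun g => (Commute.cfc_real (hcomm g) f).eq)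
  · rw [← cfc_zero ℝ M, cfc_eq_cfc_iff_eqOn] at hP
    simpa [f] using hP hc
  · refine ⟨c, ?_⟩
    rw [← cfc_one ℝ M, cfc_eq_cfc_iff_eqOn] at hP
    calc M = cfc id M := (cfc_id ℝ M).symm
      _ = cfc (fun _ => c) M := cfc_congr fun x hx => by simpa [f] using hP hx
      _ = (c : ℂ) • 1 := by rw [cfc_const c M, Algebra.algebraMap_eq_smul_one]; rfl

section matAbs

variable {d : Type*} [Fintype d] [DecidableEq d]

lemma matAbs_eq_abs (A : Matrix d d ℂ) : matAbs A = CFC.abs A := by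
  rw [CFC.abs, Matrix.star_eq_conjTranspose,
    CFC.sqrt_eq_real_sqrt _ (Matrix.posSemidef_conjTranspose_mul_self A).nonneg,
    cfcₙ_eq_cfc (hf := Real.continuous_sqrt.continuousOn) (hf0 := Real.sqrt_zero),
    (Matrix.posSemidef_conjTranspose_mul_self A).1.cfc_eq, Matrix.IsHermitian.cfc,
    Unitary.conjStarAlgAut_apply]
  rfl

lemma isHermitian_matAbs (A : Matrix d d ℂ) : (matAbs A).IsHermitian := by
  rw [matAbs_eq_abs]
  exact IsSelfAdjoint.of_nonneg (CFC.abs_nonneg A)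

lemma matAbs_unitary_conj {u : Matrix d d ℂ} (hu : u ∈ Matrix.unitaryGroup d ℂ)
    (A : Matrix d d ℂ) : matAbs (u * A * uᴴ) = u * matAbs A * uᴴ := by
  simpa only [matAbs_eq_abs, Matrix.star_eq_conjTranspose] using CFC.abs_unitary_conj hu A

end matAbs

omit [Fintype H] [DecidableEq H] [DecidableEq K] in
lemma ptK_conjTranspose (A : Matrix (K × H) (K × H) ℂ) : ptK Aᴴ = (ptK A)ᴴ := by
  ext i j
  simp [ptK]

omit [Fintype H] [DecidableEq H] [DecidableEq K] in
lemma isHermitian_ptK {A : Matrix (K × H) (K × H) ℂ} (hA : A.IsHermitian) :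
    (ptK A).IsHermitian := by
  rw [Matrix.IsHermitian, ← ptK_conjTranspose, hA]

omit [DecidableEq H] in
lemma ptK_one_kronecker_mul_mul (B C : Matrix H H ℂ)
    (A : Matrix (K × H) (K × H) ℂ) : ptK ((1 ⊗ₖ B) * A * (1 ⊗ₖ C)) = B * ptK A * C := by
  ext i j
  simp only [ptK, Matrix.mul_apply, Matrix.kroneckerMap_apply, Matrix.one_apply, ite_mul, one_mul,
    zero_mul, Fintype.sum_prod_type, Finset.sum_ite_irrel, Finset.sum_const_zero, Finset.sum_ite_eq,
    Finset.mem_univ, ↓reduceIte, mul_ite, Finset.sum_mul, mul_zero, Finset.sum_ite_eq',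
    Matrix.of_apply, Finset.mul_sum]
  rw [Finset.sum_comm]
  exact Finset.sum_congr rfl fun _ _ => Finset.sum_comm

omit [DecidableEq K] in
lemma ptK_kronecker_one_mul_comm (X : Matrix K K ℂ)
    (A : Matrix (K × H) (K × H) ℂ) : ptK ((X ⊗ₖ 1) * A) = ptK (A * (X ⊗ₖ 1)) := by
  ext i j
  simp only [ptK, Matrix.mul_apply, Matrix.kroneckerMap_apply, Matrix.one_apply, mul_ite, mul_one,
    mul_zero, ite_mul, zero_mul, Fintype.sum_prod_type, Finset.sum_ite_eq, Finset.mem_univ,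
    ↓reduceIte, Matrix.of_apply, Finset.sum_ite_eq']
  exact Finset.sum_comm.trans
    (Finset.sum_congr rfl fun _ _ => Finset.sum_congr rfl fun _ _ => mul_comm _ _)

lemma ptK_kronecker_one_conj {V : Matrix K K ℂ}
    (hV : V ∈ Matrix.unitaryGroup K ℂ) (A : Matrix (K × H) (K × H) ℂ) :
    ptK ((V ⊗ₖ 1) * A * (V ⊗ₖ 1)ᴴ) = ptK A := by
  rw [Matrix.mul_assoc, ptK_kronecker_one_mul_comm, Matrix.mul_assoc,
    Matrix.conjTranspose_kronecker, ← Matrix.mul_kronecker_mul, Matrix.conjTranspose_one,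
    ← Matrix.star_eq_conjTranspose, Unitary.star_mul_self_of_mem hV, Matrix.one_mul,
    Matrix.one_kronecker_one, Matrix.mul_one]

lemma Matrix.mul_single_one_mul_conjTranspose (U : Matrix H H ℂ) (i j : H) :
    U * Matrix.single i j 1 * Uᴴ = ∑ a, ∑ b, (U a i * star (U b j)) • Matrix.single a b 1 := by
  ext a b
  simp [Matrix.mul_apply, Matrix.single_apply, Matrix.sum_apply, ite_and]

lemma one_kronecker_conj_choi (Φ : Matrix H H ℂ →ₗ[ℂ] Matrix K K ℂ) (U : Matrix H H ℂ) :
    (1 ⊗ₖ Uᵀ) * choi Φ * (1 ⊗ₖ Uᵀ)ᴴ =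
      Matrix.of fun p q => Φ (U * Matrix.single p.2 q.2 1 * Uᴴ) p.1 q.1 := by
  ext ⟨k, i⟩ ⟨l, j⟩
  simp only [Matrix.mul_single_one_mul_conjTranspose, map_sum, map_smul, Matrix.of_apply,
    Matrix.sum_apply, Matrix.smul_apply, smul_eq_mul]
  simp only [choi, Matrix.mul_apply, Matrix.kroneckerMap_apply, Matrix.one_apply,
    Matrix.transpose_apply, ite_mul, one_mul, zero_mul, Matrix.of_apply, Fintype.sum_prod_type,
    Finset.sum_ite_irrel, Finset.sum_const_zero, Finset.sum_ite_eq, Finset.mem_univ, ↓reduceIte,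
    Matrix.conjTranspose_apply, apply_ite, RCLike.star_def, star_zero, Finset.sum_mul, mul_zero]
  rw [Finset.sum_comm]
  exact Finset.sum_congr rfl fun _ _ => Finset.sum_congr rfl fun _ _ => by ring

omit [DecidableEq K] in
lemma kronecker_one_conj_choi (Φ : Matrix H H ℂ →ₗ[ℂ] Matrix K K ℂ) (V : Matrix K K ℂ) :
    (V ⊗ₖ 1) * choi Φ * (V ⊗ₖ 1)ᴴ =
      Matrix.of fun p q => (V * Φ (Matrix.single p.2 q.2 1) * Vᴴ) p.1 q.1 := by
  ext ⟨k, i⟩ ⟨l, j⟩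
  simp [choi, Matrix.mul_apply, Matrix.kroneckerMap_apply, Fintype.sum_prod_type, Matrix.one_apply,
    Finset.sum_mul, apply_ite]

lemma one_kronecker_conj_choi_eq_of_covariant {Φ : Matrix H H ℂ →ₗ[ℂ] Matrix K K ℂ}
    {U : Matrix H H ℂ} {V : Matrix K K ℂ} (hcov : ∀ A, Φ (U * A * Uᴴ) = V * Φ A * Vᴴ) :
    (1 ⊗ₖ Uᵀ) * choi Φ * (1 ⊗ₖ Uᵀ)ᴴ = (V ⊗ₖ 1) * choi Φ * (V ⊗ₖ 1)ᴴ := by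
  rw [one_kronecker_conj_choi, kronecker_one_conj_choi]
  simp only [hcov]

theorem covariant_irreducible_MEI_general
    {G : Type*}
    (U : G → Matrix H H ℂ) (V : G → Matrix K K ℂ)
    (hU : ∀ g, U g ∈ Matrix.unitaryGroup H ℂ)
    (hV : ∀ g, V g ∈ Matrix.unitaryGroup K ℂ)
    (hirr : ∀ P : Matrix H H ℂ, P.IsHermitian → P * P = P →
      (∀ g, P * U g = U g * P) → P = 0 ∨ P = 1)
    (Φ₁ Φ₂ : Matrix H H ℂ →ₗ[ℂ] Matrix K K ℂ)
    (hcov₁ : ∀ g A, Φ₁ (U g * A * (U g)ᴴ) = V g * Φ₁ A * (V g)ᴴ)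
    (hcov₂ : ∀ g A, Φ₂ (U g * A * (U g)ᴴ) = V g * Φ₂ A * (V g)ᴴ)
    (lam : ℝ) :
    ∃ c : ℂ, ptK (matAbs ((lam : ℂ) • choi Φ₁ - ((1 : ℂ) - lam) • choi Φ₂)) =
      c • (1 : Matrix H H ℂ) := by
  set Δ := (lam : ℂ) • choi Φ₁ - ((1 : ℂ) - lam) • choi Φ₂
  set M := ptK (matAbs Δ)
  have hΔ (g : G) : (1 ⊗ₖ (U g)ᵀ) * Δ * (1 ⊗ₖ (U g)ᵀ)ᴴ = (V g ⊗ₖ 1) * Δ * (V g ⊗ₖ 1)ᴴ := by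
    simp only [Δ, Matrix.mul_sub, Matrix.sub_mul, Matrix.mul_smul, Matrix.smul_mul,
      one_kronecker_conj_choi_eq_of_covariant (hcov₁ g),
      one_kronecker_conj_choi_eq_of_covariant (hcov₂ g)]
  have hM (g : G) : (U g)ᵀ * M * ((U g)ᵀ)ᴴ = M := by
    have hUT : 1 ⊗ₖ (U g)ᵀ ∈ Matrix.unitaryGroup (K × H) ℂ :=
      Matrix.kronecker_mem_unitary (one_mem _) (Matrix.transpose_mem_unitaryGroup_iff.mpr (hU g))
    have hV1 : V g ⊗ₖ 1 ∈ Matrix.unitaryGroup (K × H) ℂ :=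
      Matrix.kronecker_mem_unitary (hV g) (one_mem _)
    calc (U g)ᵀ * M * ((U g)ᵀ)ᴴ = ptK ((1 ⊗ₖ (U g)ᵀ) * matAbs Δ * (1 ⊗ₖ (U g)ᵀ)ᴴ) := by
          rw [Matrix.conjTranspose_kronecker, Matrix.conjTranspose_one, ptK_one_kronecker_mul_mul]
      _ = ptK ((V g ⊗ₖ 1) * matAbs Δ * (V g ⊗ₖ 1)ᴴ) := by
          rw [← matAbs_unitary_conj hUT, hΔ g, matAbs_unitary_conj hV1]
      _ = M := ptK_kronecker_one_conj (hV g) _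
  have hcomm (g : G) : Mᵀ * U g = U g * Mᵀ := by
    have := Unitary.mul_eq_mul_of_mul_mul_star_eq
      (Matrix.transpose_mem_unitaryGroup_iff.mpr (hU g)) (hM g)
    simpa only [Matrix.transpose_mul, Matrix.transpose_transpose] using
      congrArg Matrix.transpose this
  obtain ⟨c, hc⟩ := Matrix.exists_eq_smul_one_of_forall_commute U hirr
    (isHermitian_ptK (isHermitian_matAbs Δ)).transpose hcomm
  exact ⟨c, by simpa using congrArg Matrix.transpose hc⟩

theorem covariant_irreducible_MEI
    {G : Type*} [Group G]
    (U : G → Matrix H H ℂ) (V : G → Matrix K K ℂ)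
    (hU : ∀ g, U g ∈ Matrix.unitaryGroup H ℂ)
    (hV : ∀ g, V g ∈ Matrix.unitaryGroup K ℂ)
    (hUhom : ∀ g h, U (g * h) = U g * U h)
    (hVhom : ∀ g h, V (g * h) = V g * V h)
    (hirr : ∀ P : Matrix H H ℂ, P.IsHermitian → P * P = P →
      (∀ g, P * U g = U g * P) → P = 0 ∨ P = 1)
    (Φ₁ Φ₂ : Matrix H H ℂ →ₗ[ℂ] Matrix K K ℂ)
    (hCP₁ : (choi Φ₁).PosSemidef) (hCP₂ : (choi Φ₂).PosSemidef)
    (hTP₁ : ∀ A, (Φ₁ A).trace = A.trace) (hTP₂ : ∀ A, (Φ₂ A).trace = A.trace)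
    (hcov₁ : ∀ g A, Φ₁ (U g * A * (U g)ᴴ) = V g * Φ₁ A * (V g)ᴴ)
    (hcov₂ : ∀ g A, Φ₂ (U g * A * (U g)ᴴ) = V g * Φ₂ A * (V g)ᴴ)
    (lam : ℝ) (hlam : 0 < lam ∧ lam < 1) :
    ∃ c : ℂ, ptK (matAbs ((lam : ℂ) • choi Φ₁ - ((1 : ℂ) - lam) • choi Φ₂)) =
      c • (1 : Matrix H H ℂ) :=
  covariant_irreducible_MEI_general U V hU hV hirr Φ₁ Φ₂ hcov₁ hcov₂ lam
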